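/- arXiv:2301.05098 — 2 statements merged into one kernel-verified Lean document; each statement's English description precedes it below -/
import Mathlib

section
/- Let n ≥ 3 and C ⊆ 𝔽₂ⁿ a linear code. If there exists s* ∈ C^⊥ ∩ V_B with 1̂_{S₂}(s*) < 0, then C contains no codeword in S₂ (i.e., N(C;S₂) = 0). -/
open Finset

noncomputable def chr {n : ℕ} (x s : Fin n → ZMod 2) : ℝ :=
  (-1) ^ (∑ i, (x i * s i).val)

noncomputable def ft {n : ℕ} (f : (Fin n → ZMod 2) → ℝ) (s : Fin n → ZMod 2) : ℝ :=
  (∑ x, f x * chr x s) / 2 ^ n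

def inS2 {n : ℕ} (x : Fin n → ZMod 2) : Prop :=
  ∀ r : ℕ, 1 ≤ r → r ≤ n →
    0 ≤ (∑ i : Fin n, if (i : ℕ) < r then (if x i = 0 then (1 : ℤ) else -1) else 0) ∧
    (∑ i : Fin n, if (i : ℕ) < r then (if x i = 0 then (1 : ℤ) else -1) else 0) ≤ 2

def bvec (n : ℕ) (i : ℕ) : Fin n → ZMod 2 :=
  if i = 0 then (fun j => if (j : ℕ) = 0 then 1 else 0)
  else fun j => if (j : ℕ) = 2 * i - 1 ∨ (j : ℕ) = 2 * i then 1 else 0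

def VB (n : ℕ) : Submodule (ZMod 2) (Fin n → ZMod 2) :=
  Submodule.span (ZMod 2) (Set.range (fun i : Fin ((n + 1) / 2) => bvec n (i : ℕ)))

open scoped Classical in
noncomputable def indS2 {n : ℕ} : (Fin n → ZMod 2) → ℝ :=
  fun x => if inS2 x then (1 : ℝ) else 0

/-! ### Auxiliary lemmas -/

private lemma zmod2_add_self (a : ZMod 2) : a + a = 0 := by revert a; decide

private lemma zmod2_pair {a b c d e f : ZMod 2} (h1 : a + d = 1) (h2 : b + e = 1)
    (h3 : c + f = 1) : (a + b + c) + (d + e + f) = 1 := by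
  revert a b c d e f; decide

private lemma step_pair {a b : ZMod 2}
    (h : (if a = 0 then (1 : ℤ) else -1) + (if b = 0 then (1 : ℤ) else -1) = 0) :
    a + b = 1 := by
  revert a b
  decide

private lemma pair_step {a b : ZMod 2} (h : a + b = 1) :
    (if a = 0 then (1 : ℤ) else -1) + (if b = 0 then (1 : ℤ) else -1) = 0 := by
  revert a b
  decide

private lemma neg_one_pow_zmod_add (a b : ZMod 2) :
    ((-1 : ℝ)) ^ (a + b).val = (-1 : ℝ) ^ a.val * (-1 : ℝ) ^ b.val := by
  rw [ZMod.val_add, ← pow_add]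
  exact (neg_one_pow_eq_pow_mod_two _).symm

private lemma chr_prod {n : ℕ} (x s : Fin n → ZMod 2) :
    chr x s = ∏ i, (-1 : ℝ) ^ (x i * s i).val := by
  rw [chr, Finset.prod_pow_eq_pow_sum]

private lemma chr_add {n : ℕ} (x y s : Fin n → ZMod 2) :
    chr (x + y) s = chr x s * chr y s := by
  rw [chr_prod, chr_prod, chr_prod, ← Finset.prod_mul_distrib]
  refine Finset.prod_congr rfl fun i _ => ?_
  have hxy : (x + y) i * s i = x i * s i + y i * s i := by
    simp [add_mul]
  rw [hxy, neg_one_pow_zmod_add]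

private lemma chr_eq_one {n : ℕ} {x s : Fin n → ZMod 2}
    (h : ∑ k, s k * x k = 0) : chr x s = 1 := by
  have h2 : ((∑ i, (x i * s i).val : ℕ) : ZMod 2) = 0 := by
    push_cast
    rw [Finset.sum_congr rfl (fun i _ => ZMod.natCast_rightInverse (x i * s i))]
    rw [Finset.sum_congr rfl (fun i _ => mul_comm (x i) (s i))]
    exact h
  have hdvd : 2 ∣ ∑ i, (x i * s i).val :=
    (ZMod.natCast_eq_zero_iff _ _).mp h2
  rw [chr]
  obtain ⟨m, hm⟩ := hdvd
  exact Even.neg_one_pow ⟨m, by omega⟩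
  
private lemma chr_pm {n : ℕ} (x s : Fin n → ZMod 2) : chr x s = 1 ∨ chr x s = -1 := by
  rw [chr]
  rcases Nat.even_or_odd (∑ i, (x i * s i).val) with hp | hp
  · exact Or.inl hp.neg_one_pow
  · exact Or.inr hp.neg_one_pow

/-! ### Partial sums and the structure of `S₂` -/

private def Pm {n : ℕ} (x : Fin n → ZMod 2) (r : ℕ) : ℤ :=
  ∑ i : Fin n, if (i : ℕ) < r then (if x i = 0 then (1 : ℤ) else -1) else 0

private lemma inS2_iff_Pm {n : ℕ} (x : Fin n → ZMod 2) :
    inS2 x ↔ ∀ r : ℕ, 1 ≤ r → r ≤ n → 0 ≤ Pm x r ∧ Pm x r ≤ 2 := Iff.rfl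

private lemma Pm_zero {n : ℕ} (x : Fin n → ZMod 2) : Pm x 0 = 0 := by simp [Pm]

private lemma Pm_succ {n : ℕ} (x : Fin n → ZMod 2) {r : ℕ} (hr : r < n) :
    Pm x (r + 1) = Pm x r + (if x ⟨r, hr⟩ = 0 then 1 else -1) := by
  unfold Pm
  have key : ∀ i : Fin n,
      (if (i : ℕ) < r + 1 then (if x i = 0 then (1 : ℤ) else -1) else 0)
      = (if (i : ℕ) < r then (if x i = 0 then (1 : ℤ) else -1) else 0)
        + (if i = ⟨r, hr⟩ then (if x i = 0 then (1 : ℤ) else -1) else 0) := by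
    intro i
    rcases eq_or_ne i (⟨r, hr⟩ : Fin n) with hieq | hine
    · subst hieq
      simp
    · have hir : (i : ℕ) ≠ r := fun hc => hine (Fin.ext hc)
      rw [if_neg hine, add_zero]
      by_cases h1 : (i : ℕ) < r
      · rw [if_pos (by omega), if_pos h1]
      · rw [if_neg (by omega), if_neg h1]
  rw [Finset.sum_congr rfl (fun i _ => key i), Finset.sum_add_distrib,
    Finset.sum_ite_eq' Finset.univ (⟨r, hr⟩ : Fin n)]
  simp

private lemma Pm_parity {n : ℕ} (x : Fin n → ZMod 2) :
    ∀ r : ℕ, r ≤ n → Pm x r % 2 = (r : ℤ) % 2 := by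
  intro r
  induction r with
  | zero => intro _; simp [Pm_zero]
  | succ k ih =>
    intro hk
    have hk' : k < n := by omega
    have ihv := ih (by omega)
    rw [Pm_succ x hk']
    split_ifs <;> push_cast <;> omega

private def CharS2 {n : ℕ} (x : Fin n → ZMod 2) : Prop :=
  (∀ h0 : 0 < n, x ⟨0, h0⟩ = 0) ∧
  ∀ j : ℕ, j % 2 = 1 → ∀ hj : j + 1 < n,
    x ⟨j, by omega⟩ + x ⟨j + 1, hj⟩ = 1

private lemma inS2_char {n : ℕ} {x : Fin n → ZMod 2} (h : inS2 x) : CharS2 x := by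
  rw [inS2_iff_Pm] at h
  have hodd : ∀ r : ℕ, r ≤ n → r % 2 = 1 → Pm x r = 1 := by
    intro r hr hro
    obtain ⟨h1, h2⟩ := h r (by omega) hr
    have hp := Pm_parity x r hr
    omega
  constructor
  · intro h0
    have h1 : Pm x 1 = 1 := hodd 1 (by omega) rfl
    have hs : Pm x 1 = Pm x 0 + (if x ⟨0, h0⟩ = 0 then 1 else -1) := Pm_succ x h0
    rw [Pm_zero] at hs
    by_contra hne
    rw [if_neg hne] at hs
    omega
  · intro j hj hjn
    have hjlt : j < n := by omega
    have e1 : Pm x j = 1 := hodd j (by omega) hj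
    have e2 : Pm x (j + 2) = 1 := hodd (j + 2) (by omega) (by omega)
    have s1 : Pm x (j + 1) = Pm x j + (if x ⟨j, hjlt⟩ = 0 then 1 else -1) :=
      Pm_succ x hjlt
    have s2 : Pm x (j + 2) = Pm x (j + 1) + (if x ⟨j + 1, hjn⟩ = 0 then 1 else -1) :=
      Pm_succ x hjn
    exact step_pair (a := x ⟨j, hjlt⟩) (b := x ⟨j + 1, hjn⟩) (by omega)

private lemma char_inS2 {n : ℕ} {x : Fin n → ZMod 2} (h : CharS2 x) : inS2 x := by
  obtain ⟨h0, hpair⟩ := h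
  have key : ∀ k : ℕ, 2 * k + 1 ≤ n → Pm x (2 * k + 1) = 1 := by
    intro k
    induction k with
    | zero =>
      intro hk
      have h1 : 0 < n := by omega
      have hs : Pm x 1 = Pm x 0 + (if x ⟨0, h1⟩ = 0 then 1 else -1) := Pm_succ x h1
      show Pm x 1 = 1
      rw [hs, Pm_zero, if_pos (h0 h1)]
      norm_num
    | succ k ih =>
      intro hk
      have ihv := ih (by omega)
      have hjlt : 2 * k + 1 < n := by omega
      have hj1 : 2 * k + 1 + 1 < n := by omega
      have s1 : Pm x (2 * k + 2) = Pm x (2 * k + 1)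
          + (if x ⟨2 * k + 1, hjlt⟩ = 0 then 1 else -1) := Pm_succ x hjlt
      have s2 : Pm x (2 * k + 3) = Pm x (2 * k + 2)
          + (if x ⟨2 * k + 2, hj1⟩ = 0 then 1 else -1) := Pm_succ x hj1
      have hp : (if x ⟨2 * k + 1, hjlt⟩ = 0 then (1 : ℤ) else -1)
          + (if x ⟨2 * k + 2, hj1⟩ = 0 then (1 : ℤ) else -1) = 0 :=
        pair_step (a := x ⟨2 * k + 1, hjlt⟩) (b := x ⟨2 * k + 2, hj1⟩)
          (hpair (2 * k + 1) (by omega) hj1)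
      show Pm x (2 * k + 3) = 1
      omega
  rw [inS2_iff_Pm]
  intro r h1 hrn
  rcases Nat.even_or_odd r with he | ho
  · obtain ⟨k, hk⟩ : ∃ k, r = 2 * k + 2 := by
      obtain ⟨m, hm⟩ := he; exact ⟨m - 1, by omega⟩
    subst hk
    have hjlt : 2 * k + 1 < n := by omega
    have s1 : Pm x (2 * k + 2) = Pm x (2 * k + 1)
        + (if x ⟨2 * k + 1, hjlt⟩ = 0 then 1 else -1) := Pm_succ x hjlt
    have hkv := key k (by omega)
    constructor <;> · split_ifs at s1 <;> omega
  · obtain ⟨k, hk⟩ := ho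
    have hk' : r = 2 * k + 1 := by omega
    subst hk'
    have hkv := key k (by omega)
    omega

private lemma char_add3 {n : ℕ} {x y z : Fin n → ZMod 2}
    (hx : CharS2 x) (hy : CharS2 y) (hz : CharS2 z) : CharS2 (x + y + z) := by
  obtain ⟨hx0, hxp⟩ := hx
  obtain ⟨hy0, hyp⟩ := hy
  obtain ⟨hz0, hzp⟩ := hz
  constructor
  · intro h0
    simp only [Pi.add_apply, hx0 h0, hy0 h0, hz0 h0, add_zero]
  · intro j hj hjn
    have hkey := zmod2_pair (hxp j hj hjn) (hyp j hj hjn) (hzp j hj hjn)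
    simp only [Pi.add_apply]
    linear_combination hkey

private lemma inS2_add3 {n : ℕ} {x y z : Fin n → ZMod 2}
    (hx : inS2 x) (hy : inS2 y) (hz : inS2 z) : inS2 (x + y + z) :=
  char_inS2 (char_add3 (inS2_char hx) (inS2_char hy) (inS2_char hz))

open scoped Classical in
theorem no_S2_codewords {n : ℕ} (hn : 3 ≤ n)
    (C : Submodule (ZMod 2) (Fin n → ZMod 2))
    (h : ∃ s : Fin n → ZMod 2,
      (∀ c ∈ C, ∑ k, s k * c k = 0) ∧ s ∈ VB n ∧ ft indS2 s < 0) :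
    (univ.filter (fun x : Fin n → ZMod 2 => x ∈ C ∧ inS2 x)).card = 0 := by
  classical
  by_contra hcard
  obtain ⟨x₀, hx₀⟩ := Finset.card_ne_zero.mp hcard
  rw [Finset.mem_filter] at hx₀
  obtain ⟨-, hx₀C, hx₀S⟩ := hx₀
  obtain ⟨s, hsC, -, hlt⟩ := h
  have hchr0 : chr x₀ s = 1 := chr_eq_one (hsC x₀ hx₀C)
  set T : Finset (Fin n → ZMod 2) := Finset.univ.filter (fun x => inS2 x) with hT
  set W : Finset (Fin n → ZMod 2) := T.image (fun a => x₀ + a) with hW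
  have hv2 : ∀ v : Fin n → ZMod 2, v + v = 0 := fun v => funext fun i => zmod2_add_self (v i)
  have hmemW : ∀ w, w ∈ W ↔ inS2 (x₀ + w) := by
    intro w
    rw [hW, Finset.mem_image]
    constructor
    · rintro ⟨a, ha, rfl⟩
      rw [hT, Finset.mem_filter] at ha
      have hrw : x₀ + (x₀ + a) = a := by rw [← add_assoc, hv2, zero_add]
      rw [hrw]
      exact ha.2
    · intro hw
      refine ⟨x₀ + w, ?_, by rw [← add_assoc, hv2, zero_add]⟩
      rw [hT, Finset.mem_filter]
      exact ⟨Finset.mem_univ _, hw⟩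
  have hWadd : ∀ w₁ ∈ W, ∀ w₂ ∈ W, w₁ + w₂ ∈ W := by
    intro w₁ h1 w₂ h2
    rw [hmemW] at h1 h2 ⊢
    have hkey : x₀ + (w₁ + w₂) = x₀ + (x₀ + w₁) + (x₀ + w₂) := by
      funext i
      simp only [Pi.add_apply]
      have hz : ∀ a b c : ZMod 2, a + (b + c) = a + (a + b) + (a + c) := by decide
      exact hz (x₀ i) (w₁ i) (w₂ i)
    rw [hkey]
    exact inS2_add3 hx₀S h1 h2
  have hsum : (∑ x ∈ T, chr x s) = ∑ w ∈ W, chr w s := by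
    rw [hW, Finset.sum_image (by intro a _ b _ hab; exact add_left_cancel hab)]
    refine (Finset.sum_congr rfl fun a _ => ?_).symm
    rw [chr_add, hchr0, one_mul]
  have hnonneg : (0 : ℝ) ≤ ∑ w ∈ W, chr w s := by
    by_cases hall : ∀ w ∈ W, chr w s = 1
    · rw [Finset.sum_congr rfl hall]
      simp
    · push_neg at hall
      obtain ⟨w₁, hw₁, hne⟩ := hall
      have hw1v : chr w₁ s = -1 := (chr_pm w₁ s).resolve_left hne
      have hre : (∑ w ∈ W, chr w s) = ∑ w ∈ W, chr (w₁ + w) s := by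
        refine Finset.sum_nbij' (i := fun w => w₁ + w) (j := fun w => w₁ + w)
          ?_ ?_ ?_ ?_ ?_
        · intro a ha
          exact hWadd _ hw₁ _ ha
        · intro a ha
          exact hWadd _ hw₁ _ ha
        · intro a _
          show w₁ + (w₁ + a) = a
          rw [← add_assoc, hv2, zero_add]
        · intro a _
          show w₁ + (w₁ + a) = a
          rw [← add_assoc, hv2, zero_add]
        · intro a _
          show chr a s = chr (w₁ + (w₁ + a)) s
          rw [← add_assoc, hv2, zero_add]
      have hneg : (∑ w ∈ W, chr (w₁ + w) s) = -∑ w ∈ W, chr w s := by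
        rw [← Finset.sum_neg_distrib]
        refine Finset.sum_congr rfl fun a _ => ?_
        rw [chr_add, hw1v, neg_one_mul]
      have : (∑ w ∈ W, chr w s) = 0 := by linarith [hre, hneg]
      linarith
  have hft : ft indS2 s = (∑ w ∈ W, chr w s) / 2 ^ n := by
    rw [← hsum]
    simp only [ft]
    congr 1
    rw [hT, Finset.sum_filter]
    refine Finset.sum_congr rfl fun x _ => ?_
    by_cases hx : inS2 x <;> simp [indS2, hx]
  rw [hft] at hlt
  have h2 : (0 : ℝ) < 2 ^ n := by positivity
  have := div_nonneg hnonneg (le_of_lt h2)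
  linarith
end

section
/- Let n = 2^m - 1 with m ≥ 3 and let C be the [2^m-1, 2^m-1-m] binary Hamming code (with columns of the parity check matrix being the binary representations of 1,…,2^m-1). Then the number of codewords of C lying in the 2-charge constrained set S₂ equals 2^{⌊(2^m-1)/2⌋ - 1}. -/
/-!
A word lies in `S₂` iff its running digital sum equals `1` after every prefix of odd length,
i.e. (counting positions from `0`) iff `x₀ = 0` and each pair `(x_{2k+1}, x_{2k+2})` equals
`(c_k + 1, c_k)` for a free bit `c_k`. On such a word the Hamming check of bit `j ≥ 1` weighs
both members of a pair by the same bit, so it counts the `t < 2^(m-1)` with bit `j - 1` set,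
an even number once `m ≥ 3`; the check of bit `0` is `∑ c_k`. Hence the codewords in `S₂`
correspond to the even-weight vectors `c ∈ 𝔽₂^((n-1)/2)`.
-/

open Finset

def chargeSign (a : ZMod 2) : ℤ := if a = 0 then 1 else -1

lemma chargeSign_eq_one_or_eq_neg_one (a : ZMod 2) : chargeSign a = 1 ∨ chargeSign a = -1 := by
  revert a; decide

lemma chargeSign_eq_one_iff {a : ZMod 2} : chargeSign a = 1 ↔ a = 0 := by
  revert a; decide

lemma chargeSign_add_chargeSign_eq_zero_iff {a b : ZMod 2} :
    chargeSign a + chargeSign b = 0 ↔ a + b = 1 := by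
  revert a b; decide

section Charge

variable {n : ℕ}

def charge (x : Fin n → ZMod 2) (r : ℕ) : ℤ :=
  ∑ i : Fin n, if (i : ℕ) < r then chargeSign (x i) else 0

lemma inS2_iff_charge (x : Fin n → ZMod 2) :
    inS2 x ↔ ∀ r, 1 ≤ r → r ≤ n → 0 ≤ charge x r ∧ charge x r ≤ 2 := Iff.rfl

@[simp]
lemma charge_zero (x : Fin n → ZMod 2) : charge x 0 = 0 := by
  simp [charge]

lemma charge_succ (x : Fin n → ZMod 2) {r : ℕ} (hr : r < n) :
    charge x (r + 1) = charge x r + chargeSign (x ⟨r, hr⟩) := by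
  have hfilter : univ.filter (fun i : Fin n => (i : ℕ) < r + 1) =
      insert ⟨r, hr⟩ (univ.filter (fun i : Fin n => (i : ℕ) < r)) := by
    ext i; simp [Fin.ext_iff]; omega
  simp only [charge, ← sum_filter]
  rw [hfilter, sum_insert (by simp), add_comm]

lemma charge_emod_two (x : Fin n → ZMod 2) {r : ℕ} (hr : r ≤ n) : charge x r % 2 = r % 2 := by
  induction r with
  | zero => simp
  | succ r ih =>
    have := chargeSign_eq_one_or_eq_neg_one (x ⟨r, hr⟩)
    rw [charge_succ x hr]
    omega

lemma inS2_iff_charge_odd (x : Fin n → ZMod 2) :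
    inS2 x ↔ ∀ k, 2 * k + 1 ≤ n → charge x (2 * k + 1) = 1 := by
  rw [inS2_iff_charge]
  constructor
  · intro h k hk
    have := charge_emod_two x hk
    have := h (2 * k + 1) (by omega) hk
    omega
  · intro h r hr hrn
    obtain ⟨k, rfl | rfl⟩ : ∃ k, r = 2 * k + 1 ∨ r = 2 * k + 2 := ⟨(r - 1) / 2, by omega⟩
    · simp [h k hrn]
    · have := chargeSign_eq_one_or_eq_neg_one (x ⟨2 * k + 1, hrn⟩)
      rw [charge_succ x hrn, h k (by omega)]
      omega

lemma inS2.apply_zero {x : Fin n → ZMod 2} (hx : inS2 x) (h : 0 < n) : x ⟨0, h⟩ = 0 := by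
  have h1 := (inS2_iff_charge_odd x).1 hx 0 h
  rwa [charge_succ x h, charge_zero, zero_add, chargeSign_eq_one_iff] at h1

lemma inS2.add_eq_one {x : Fin n → ZMod 2} (hx : inS2 x) {k : ℕ} (h : 2 * k + 2 < n) :
    x ⟨2 * k + 1, by omega⟩ + x ⟨2 * k + 2, h⟩ = 1 := by
  rw [inS2_iff_charge_odd] at hx
  have h1 := hx k (by omega)
  have h2 := hx (k + 1) (by omega)
  rw [show 2 * (k + 1) + 1 = 2 * k + 2 + 1 by ring, charge_succ x h,
    charge_succ x (show 2 * k + 1 < n by omega), h1, add_assoc, add_eq_left] at h2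
  exact chargeSign_add_chargeSign_eq_zero_iff.1 h2

end Charge

section S2Word

variable {n : ℕ}

/-- With 0-based positions, the paper's pairs `(x_{2i}, x_{2i+1})` sit at `(2k + 1, 2k + 2)`,
`k = i - 1`, and receive `(c_k + 1, c_k)`. -/
def s2Word (c : Fin (n / 2) → ZMod 2) (i : Fin n) : ZMod 2 :=
  if h : (i : ℕ) = 0 then 0 else c ⟨((i : ℕ) - 1) / 2, by omega⟩ + (i : ℕ)

variable (c : Fin (n / 2) → ZMod 2)

lemma s2Word_zero (h : 0 < n) : s2Word c ⟨0, h⟩ = 0 := rfl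

lemma s2Word_odd {k : ℕ} (h : 2 * k + 1 < n) :
    s2Word c ⟨2 * k + 1, h⟩ = c ⟨k, by omega⟩ + 1 := by
  simp only [s2Word, dif_neg (Nat.succ_ne_zero _), Nat.add_sub_cancel,
    Nat.mul_div_cancel_left k two_pos]
  push_cast
  rw [show (2 : ZMod 2) = 0 from rfl]
  ring

lemma s2Word_even {k : ℕ} (h : 2 * k + 2 < n) : s2Word c ⟨2 * k + 2, h⟩ = c ⟨k, by omega⟩ := by
  simp only [s2Word, dif_neg (Nat.succ_ne_zero _), show (2 * k + 2 - 1) / 2 = k by omega]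
  push_cast
  rw [show (2 : ZMod 2) = 0 from rfl]
  ring

lemma charge_s2Word_odd {k : ℕ} (hk : 2 * k + 1 ≤ n) : charge (s2Word c) (2 * k + 1) = 1 := by
  induction k with
  | zero => rw [charge_succ _ hk, charge_zero, s2Word_zero, zero_add, chargeSign_eq_one_iff]
  | succ k ih =>
    have hpair : s2Word c ⟨2 * k + 1, by omega⟩ + s2Word c ⟨2 * k + 2, by omega⟩ = 1 := by
      rw [s2Word_odd, s2Word_even, add_right_comm, CharTwo.add_self_eq_zero, zero_add]
    rw [show 2 * (k + 1) + 1 = 2 * k + 1 + 1 + 1 by ring,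
      charge_succ _ (show 2 * k + 2 < n by omega), charge_succ _ (show 2 * k + 1 < n by omega),
      ih (by omega), add_assoc, chargeSign_add_chargeSign_eq_zero_iff.2 hpair, add_zero]

lemma inS2_s2Word : inS2 (s2Word c) :=
  (inS2_iff_charge_odd _).2 fun _ => charge_s2Word_odd c

lemma s2Word_injective :
    Function.Injective (s2Word : (Fin (n / 2) → ZMod 2) → Fin n → ZMod 2) := by
  intro c c' h
  funext k
  have hk := congrFun h ⟨2 * k + 1, by omega⟩
  rwa [s2Word_odd, s2Word_odd, add_left_inj] at hk

lemma eq_s2Word_of_inS2 {x : Fin n → ZMod 2} (hx : inS2 x) :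
    s2Word (fun k : Fin (n / 2) => x ⟨2 * k + 1, by omega⟩ + 1) = x := by
  funext ⟨i, hi⟩
  rcases i with _ | i
  · rw [s2Word_zero, hx.apply_zero]
  obtain ⟨k, rfl | rfl⟩ : ∃ k, i = 2 * k ∨ i = 2 * k + 1 := ⟨i / 2, by omega⟩
  · rw [s2Word_odd, add_assoc, CharTwo.add_self_eq_zero, add_zero]
  · rw [s2Word_even, ← hx.add_eq_one hi, ← add_assoc, CharTwo.add_self_eq_zero, zero_add]

lemma inS2_iff_exists_s2Word (x : Fin n → ZMod 2) : inS2 x ↔ ∃ c, s2Word c = x :=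
  ⟨fun hx => ⟨_, eq_s2Word_of_inS2 hx⟩, by rintro ⟨c, rfl⟩; exact inS2_s2Word c⟩

end S2Word

lemma Finset.sum_range_two_mul {M : Type*} [AddCommMonoid M] (f : ℕ → M) (p : ℕ) :
    ∑ i ∈ range (2 * p), f i = ∑ k ∈ range p, (f (2 * k) + f (2 * k + 1)) := by
  induction p with
  | zero => simp
  | succ p ih =>
    rw [mul_add, mul_one, sum_range_succ, sum_range_succ, sum_range_succ, ih, add_assoc]

lemma sum_testBit_range_two_pow {s : ℕ} (hs : 2 ≤ s) (j : ℕ) :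
    ∑ t ∈ range (2 ^ s), (if Nat.testBit t j then (1 : ZMod 2) else 0) = 0 := by
  obtain ⟨s, rfl⟩ : ∃ s', s = s' + 1 := ⟨s - 1, by omega⟩
  rw [pow_succ', sum_range_two_mul]
  cases j with
  | zero =>
    have hpair (k : ℕ) : (if Nat.testBit (2 * k) 0 then (1 : ZMod 2) else 0) +
        (if Nat.testBit (2 * k + 1) 0 then 1 else 0) = 1 := by
      simp [Nat.testBit_zero]
    simp only [hpair, sum_const, card_range, nsmul_eq_mul, mul_one]
    obtain ⟨s, rfl⟩ : ∃ s', s = s' + 1 := ⟨s - 1, by omega⟩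
    rw [Nat.cast_pow, pow_succ, show ((2 : ℕ) : ZMod 2) = 0 from rfl, mul_zero]
  | succ j =>
    refine sum_eq_zero fun k _ => ?_
    rw [Nat.testBit_add_one, Nat.testBit_add_one, Nat.mul_div_cancel_left k two_pos,
      show (2 * k + 1) / 2 = k by omega, CharTwo.add_self_eq_zero]

lemma two_pow_sub_one_mod_two_and_div_two {m : ℕ} (hm : 1 ≤ m) :
    (2 ^ m - 1) % 2 = 1 ∧ (2 ^ m - 1) / 2 + 1 = 2 ^ (m - 1) := by
  obtain ⟨m, rfl⟩ : ∃ m', m = m' + 1 := ⟨m - 1, by omega⟩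
  have := Nat.one_le_two_pow (n := m)
  rw [pow_succ', Nat.add_sub_cancel]
  omega

/-- Bit `j` of the syndrome of `x` for the parity check matrix whose column `i` (0-based) is the
binary representation of `i + 1`. -/
def hammingCheck {n : ℕ} (j : ℕ) (x : Fin n → ZMod 2) : ZMod 2 :=
  ∑ i : Fin n, x i * if Nat.testBit ((i : ℕ) + 1) j then 1 else 0

section HammingCheck

variable {n : ℕ} (c : Fin (n / 2) → ZMod 2)

lemma sum_s2Word_mul (hn : n % 2 = 1) (w : ℕ → ZMod 2) :
    ∑ i : Fin n, s2Word c i * w (i + 1) =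
      ∑ k : Fin (n / 2), ((c k + 1) * w (2 * k + 2) + c k * w (2 * k + 3)) := by
  rw [sum_fin_eq_sum_range, sum_fin_eq_sum_range,
    show range n = range (2 * (n / 2) + 1) by congr 1; omega, sum_range_succ', sum_range_two_mul,
    dif_pos (by omega), s2Word_zero, zero_mul, add_zero]
  refine sum_congr rfl fun k hk => ?_
  rw [mem_range] at hk
  rw [dif_pos hk, dif_pos (by omega), dif_pos (by omega), s2Word_odd, s2Word_even]

lemma hammingCheck_zero_s2Word (hn : n % 2 = 1) : hammingCheck 0 (s2Word c) = ∑ k, c k := by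
  rw [hammingCheck, sum_s2Word_mul c hn fun t => if Nat.testBit t 0 then 1 else 0]
  refine sum_congr rfl fun k _ => ?_
  simp [Nat.testBit_zero, Nat.add_mod]

lemma hammingCheck_succ_s2Word (hn : n % 2 = 1) (j : ℕ) :
    hammingCheck (j + 1) (s2Word c) =
      ∑ t ∈ range (n / 2 + 1), if Nat.testBit t j then 1 else 0 := by
  rw [hammingCheck, sum_s2Word_mul c hn fun t => if Nat.testBit t (j + 1) then 1 else 0,
    sum_range_succ', Nat.zero_testBit, if_neg Bool.false_ne_true, add_zero,
    ← Fin.sum_univ_eq_sum_range]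
  refine sum_congr rfl fun k _ => ?_
  rw [Nat.testBit_add_one, Nat.testBit_add_one, show (2 * (k : ℕ) + 2) / 2 = k + 1 by omega,
    show (2 * (k : ℕ) + 3) / 2 = k + 1 by omega, ← add_mul, add_right_comm,
    CharTwo.add_self_eq_zero, zero_add, one_mul]

end HammingCheck

lemma hammingCheck_s2Word_eq_zero_iff {m : ℕ} (hm : 3 ≤ m)
    (c : Fin ((2 ^ m - 1) / 2) → ZMod 2) :
    (∀ j : Fin m, hammingCheck j (s2Word c) = 0) ↔ ∑ k, c k = 0 := by
  obtain ⟨hn, hhalf⟩ := two_pow_sub_one_mod_two_and_div_two (show 1 ≤ m by omega)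
  refine ⟨fun h => hammingCheck_zero_s2Word c hn ▸ h ⟨0, by omega⟩, fun hc ⟨j, hj⟩ => ?_⟩
  cases j with
  | zero => rw [hammingCheck_zero_s2Word c hn, hc]
  | succ j => rw [hammingCheck_succ_s2Word c hn, hhalf, sum_testBit_range_two_pow (by omega)]

lemma card_filter_sum_eq {G : Type*} [AddCommGroup G] [Fintype G] [DecidableEq G] {q : ℕ}
    (hq : 0 < q) (g : G) : #{c : Fin q → G | ∑ i, c i = g} = Fintype.card G ^ (q - 1) := by
  obtain ⟨q, rfl⟩ : ∃ q', q = q' + 1 := ⟨q - 1, by omega⟩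
  calc #{c : Fin (q + 1) → G | ∑ i, c i = g} = #(univ : Finset (Fin q → G)) := by
        refine card_nbij' Fin.tail (fun a => Fin.cons (g - ∑ i, a i) a) (by simp) ?_ ?_ ?_
        · intro a _
          simp [Fin.sum_univ_succ]
        · intro c hc
          simp only [coe_filter, mem_univ, true_and, Set.mem_ofPred_eq] at hc
          simp [← hc, Fin.sum_univ_succ, Fin.tail]
        · intro a _
          exact Fin.tail_cons _ _
    _ = Fintype.card G ^ (q + 1 - 1) := by simp

open scoped Classical in
theorem hamming_S2_count (m : ℕ) (hm : 3 ≤ m) :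
    (univ.filter (fun x : Fin (2 ^ m - 1) → ZMod 2 =>
      (∀ j : Fin m,
        ∑ i, x i * (if Nat.testBit ((i : ℕ) + 1) (j : ℕ) then (1 : ZMod 2) else 0) = 0)
      ∧ inS2 x)).card = 2 ^ ((2 ^ m - 1) / 2 - 1) := by
  have hcodewords : univ.filter (fun x : Fin (2 ^ m - 1) → ZMod 2 =>
      (∀ j : Fin m, hammingCheck j x = 0) ∧ inS2 x) =
      (univ.filter fun c : Fin ((2 ^ m - 1) / 2) → ZMod 2 => ∑ k, c k = 0).map
        ⟨s2Word, s2Word_injective⟩ := by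
    ext x
    simp only [mem_filter, mem_univ, true_and, mem_map, Function.Embedding.coeFn_mk,
      inS2_iff_exists_s2Word]
    constructor
    · rintro ⟨hchecks, c, rfl⟩
      exact ⟨c, (hammingCheck_s2Word_eq_zero_iff hm c).1 hchecks, rfl⟩
    · rintro ⟨c, hc, rfl⟩
      exact ⟨(hammingCheck_s2Word_eq_zero_iff hm c).2 hc, c, rfl⟩
  have hhalf : 0 < (2 ^ m - 1) / 2 := by
    have := (two_pow_sub_one_mod_two_and_div_two (show 1 ≤ m by omega)).2
    have := Nat.pow_le_pow_right two_pos (show 2 ≤ m - 1 by omega)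
    omega
  convert (congrArg card hcodewords).trans ((card_map _).trans (card_filter_sum_eq hhalf 0))
  · rfl
  · exact (ZMod.card 2).symm
end
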